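/- Let K be a field, Q a labelled quiver with vertices V, and (𝒱, φ) a representation of Q consistent with the labelling. Let u, v, w ∈ V. Then for all f ∈ K⟨X⟩_{v,w} and g ∈ K⟨X⟩_{u,v}, the product fg lies in K⟨X⟩_{u,w} and φ_{u,w}(fg) = φ_{v,w}(f) ∘ φ_{u,v}(g) as K-linear maps from 𝒱_u to 𝒱_w. -/

import Mathlib

open scoped BigOperators

/-- The free `R`-algebra `R⟨X⟩` on `X`, as the monoid algebra over `R`
of the free monoid `⟨X⟩` of words over `X`. -/
abbrev FreeAlg (R X : Type*) [CommRing R] := MonoidAlgebra R (FreeMonoid X)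

/-- A labelled quiver `Q = (V, E, X, s, t, l)`: a directed multigraph with vertex set `V`,
edge set `E`, source and target maps `s, t : E → V` and labelling `l : E → X`. -/
structure LabelledQuiver (V E X : Type*) where
  src : E → V
  tgt : E → V
  lab : E → X

/-- Paths in a labelled quiver `Q`; `LQPath Q u w` is the type of paths with source `u` and
target `w`.  `nil v` is the empty path at `v`; `cons e p` appends the edge `e` after `p`. -/
inductive LQPath {V E X : Type*} (Q : LabelledQuiver V E X) : V → V → Type _ where
  | nil (v : V) : LQPath Q v v
  | cons {u : V} (e : E) (p : LQPath Q u (Q.src e)) : LQPath Q u (Q.tgt e)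

namespace LQPath
variable {V E X : Type*} {Q : LabelledQuiver V E X}
/-- The label `l(p) = l(eₙ)⋯l(e₁) ∈ ⟨X⟩` of a path; the empty path has label `1`. -/
def label : {u w : V} → LQPath Q u w → FreeMonoid X
  | _, _, .nil _ => 1
  | _, _, .cons e p => FreeMonoid.of (Q.lab e) * p.label
end LQPath

namespace LabelledQuiver

variable {V E X : Type*} (Q : LabelledQuiver V E X)

/-- The set of signatures `σ(m) = {(s(p), t(p)) : p a path in Q with l(p) = m}`. -/
def sigmaM (m : FreeMonoid X) : Set (V × V) :=
  {vw | ∃ p : LQPath Q vw.1 vw.2, p.label = m}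

variable {R : Type*} [CommRing R]

/-- The set of signatures `σ(f) = ⋂_{m ∈ supp(f)} σ(m)` of a polynomial. -/
def sigmaP (f : FreeAlg R X) : Set (V × V) :=
  ⋂ m ∈ (f.coeff : FreeMonoid X →₀ R).support, Q.sigmaM m

/-- `f` is compatible with `Q` if `σ(f) ≠ ∅`. -/
def Compatible (f : FreeAlg R X) : Prop :=
  (Q.sigmaP f).Nonempty

/-- `f` is uniformly compatible with `Q` if it is compatible and all monomials in its
support have the same set of signatures. -/
def UniformlyCompatible (f : FreeAlg R X) : Prop :=
  Q.Compatible f ∧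
    ∀ m ∈ (f.coeff : FreeMonoid X →₀ R).support, ∀ m' ∈ (f.coeff : FreeMonoid X →₀ R).support,
      Q.sigmaM m = Q.sigmaM m'

/-- The set of sources `s(f)` of a polynomial: the projection of `σ(f)` to the first
component. -/
def srcSet (f : FreeAlg R X) : Set V := Prod.fst '' Q.sigmaP f

/-- The set of targets `t(f)` of a polynomial: the projection of `σ(f)` to the second
component. -/
def tgtSet (f : FreeAlg R X) : Set V := Prod.snd '' Q.sigmaP f

end LabelledQuiver

/-- A representation `(𝒱, φ)` of a labelled quiver `Q` by `K`-vector spaces: a vector space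
`𝒱_v` for each vertex `v` and a `K`-linear map `φ(e) : 𝒱_{s(e)} → 𝒱_{t(e)}` for each edge. -/
structure QuiverRep (K : Type*) [Field K] {V E X : Type*} (Q : LabelledQuiver V E X) where
  space : V → Type*
  [addCommGroup : ∀ v, AddCommGroup (space v)]
  [module : ∀ v, Module K (space v)]
  map : (e : E) → space (Q.src e) →ₗ[K] space (Q.tgt e)

attribute [instance] QuiverRep.addCommGroup QuiverRep.module

namespace QuiverRep

variable {K : Type*} [Field K] {V E X : Type*} {Q : LabelledQuiver V E X}

/-- The linear map `φ(eₙ)⋯φ(e₁)` induced by a path; the empty path induces the identity. -/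
def pathMap (ρ : QuiverRep K Q) : {u w : V} → LQPath Q u w → (ρ.space u →ₗ[K] ρ.space w)
  | _, _, .nil _ => LinearMap.id
  | _, _, .cons e p => (ρ.map e).comp (ρ.pathMap p)

/-- A representation is consistent with the labelling if any two paths with the same source,
the same target and the same label induce the same linear map. -/
def Consistent (ρ : QuiverRep K Q) : Prop :=
  ∀ (u w : V) (p q : LQPath Q u w), p.label = q.label → ρ.pathMap p = ρ.pathMap q

/-- The realization `φ_{v,w}(f)` of a polynomial `f` w.r.t. a representation: the `K`-linear
extension of the assignment sending the label of a path from `v` to `w` to the composition of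
the linear maps along the path (an arbitrary such path is chosen for each monomial; for a
consistent representation the result does not depend on this choice). -/
noncomputable def realize (ρ : QuiverRep K Q) (v w : V) (f : FreeAlg K X) :
    ρ.space v →ₗ[K] ρ.space w :=
  Finsupp.sum (f.coeff : FreeMonoid X →₀ K) fun m c =>
    letI := Classical.propDecidable (∃ p : LQPath Q v w, p.label = m)
    c • (if h : ∃ p : LQPath Q v w, p.label = m then ρ.pathMap h.choose else 0)

end QuiverRep

/-! Concatenating a path from `v` to `w` with one from `u` to `v` multiplies labels and composes
the induced maps; by consistency the realization of a monomial may be computed along any path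
carrying it, so `φ` is multiplicative on pairs of monomials from the supports of `f` and `g`,
and bilinearity of composition extends this to `f * g`. -/

theorem MonoidAlgebra.linearCombination_coeff_mul {k G M₁ M₂ M₃ : Type*} [CommSemiring k] [Mul G]
    [AddCommMonoid M₁] [AddCommMonoid M₂] [AddCommMonoid M₃]
    [Module k M₁] [Module k M₂] [Module k M₃] (B : M₁ →ₗ[k] M₂ →ₗ[k] M₃)
    {S : G → M₁} {R : G → M₂} {T : G → M₃} {f g : MonoidAlgebra k G}
    (h : ∀ a ∈ f.coeff.support, ∀ b ∈ g.coeff.support, T (a * b) = B (S a) (R b)) :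
    Finsupp.linearCombination k T (f * g).coeff =
      B (Finsupp.linearCombination k S f.coeff) (Finsupp.linearCombination k R g.coeff) := by
  simp only [MonoidAlgebra.mul_def, MonoidAlgebra.coeff_finsuppSum, MonoidAlgebra.coeff_single,
    map_finsuppSum, Finsupp.linearCombination_single]
  rw [Finsupp.linearCombination_apply, map_finsuppSum, LinearMap.finsupp_sum_apply]
  refine Finsupp.sum_congr fun a ha => ?_
  rw [Finsupp.linearCombination_apply, map_smul, map_finsuppSum]
  refine Finsupp.sum_congr fun b hb => ?_
  rw [h a ha b hb, LinearMap.smul_apply, map_smul, smul_smul, mul_comm]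

namespace LQPath
variable {V E X : Type*} {Q : LabelledQuiver V E X}

def comp : {u v w : V} → LQPath Q v w → LQPath Q u v → LQPath Q u w
  | _, _, _, .nil _, q => q
  | _, _, _, .cons e p, q => .cons e (p.comp q)

theorem label_comp : ∀ {u v w : V} (p : LQPath Q v w) (q : LQPath Q u v),
    (p.comp q).label = p.label * q.label
  | _, _, _, .nil _, q => by simp [comp, label]
  | _, _, _, .cons e p, q => by simp [comp, label, label_comp p q, mul_assoc]

end LQPath

namespace LabelledQuiver
variable {V E X R : Type*} [CommRing R] {Q : LabelledQuiver V E X}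

theorem mem_sigmaP_iff {v w : V} {f : FreeAlg R X} :
    (v, w) ∈ Q.sigmaP f ↔ ∀ m ∈ f.coeff.support, ∃ p : LQPath Q v w, p.label = m :=
  Set.mem_iInter₂

theorem mem_sigmaP_mul {u v w : V} {f g : FreeAlg R X} (hf : (v, w) ∈ Q.sigmaP f)
    (hg : (u, v) ∈ Q.sigmaP g) : (u, w) ∈ Q.sigmaP (f * g) := by
  classical
  refine mem_sigmaP_iff.mpr fun m hm => ?_
  obtain ⟨a, ha, b, hb, rfl⟩ := Finset.mem_mul.mp (MonoidAlgebra.support_coeff_mul_subset f g hm)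
  obtain ⟨p, rfl⟩ := mem_sigmaP_iff.mp hf a ha
  obtain ⟨q, rfl⟩ := mem_sigmaP_iff.mp hg b hb
  exact ⟨p.comp q, p.label_comp q⟩

end LabelledQuiver

namespace QuiverRep
variable {K : Type*} [Field K] {V E X : Type*} {Q : LabelledQuiver V E X} (ρ : QuiverRep K Q)

theorem pathMap_comp : ∀ {u v w : V} (p : LQPath Q v w) (q : LQPath Q u v),
    ρ.pathMap (p.comp q) = (ρ.pathMap p).comp (ρ.pathMap q)
  | _, _, _, .nil _, q => by simp only [LQPath.comp, pathMap, LinearMap.id_comp]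
  | _, _, _, .cons e p, q => by
    simp only [LQPath.comp, pathMap, pathMap_comp p q, LinearMap.comp_assoc]

noncomputable def monomialMap (v w : V) (m : FreeMonoid X) : ρ.space v →ₗ[K] ρ.space w :=
  letI := Classical.propDecidable (∃ p : LQPath Q v w, p.label = m)
  if h : ∃ p : LQPath Q v w, p.label = m then ρ.pathMap h.choose else 0

theorem realize_eq_linearCombination (v w : V) (f : FreeAlg K X) :
    ρ.realize v w f = Finsupp.linearCombination K (ρ.monomialMap v w) f.coeff :=
  (Finsupp.linearCombination_apply _ _).symm

variable {ρ}

theorem Consistent.monomialMap_label (hρ : ρ.Consistent) {v w : V} (p : LQPath Q v w) :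
    ρ.monomialMap v w p.label = ρ.pathMap p := by
  have h : ∃ q : LQPath Q v w, q.label = p.label := ⟨p, rfl⟩
  rw [monomialMap, dif_pos h]
  exact hρ v w _ p h.choose_spec

theorem Consistent.monomialMap_label_mul (hρ : ρ.Consistent) {u v w : V} (p : LQPath Q v w)
    (q : LQPath Q u v) :
    ρ.monomialMap u w (p.label * q.label) =
      (ρ.monomialMap v w p.label).comp (ρ.monomialMap u v q.label) := by
  rw [← LQPath.label_comp, hρ.monomialMap_label, hρ.monomialMap_label, hρ.monomialMap_label,
    pathMap_comp]

end QuiverRep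

/-- For a consistent representation of `Q` over a field `K` and vertices
`u, v, w`: for all `f ∈ K⟨X⟩_{v,w}` and `g ∈ K⟨X⟩_{u,v}` we have `f·g ∈ K⟨X⟩_{u,w}` and
`φ_{u,w}(f·g) = φ_{v,w}(f) ∘ φ_{u,v}(g)`. -/
theorem realize_mul {K : Type*} [Field K] {V E X : Type*} {Q : LabelledQuiver V E X}
    (ρ : QuiverRep K Q) (hρ : ρ.Consistent) (u v w : V) (f g : FreeAlg K X)
    (hf : (v, w) ∈ Q.sigmaP f) (hg : (u, v) ∈ Q.sigmaP g) :
    (u, w) ∈ Q.sigmaP (f * g) ∧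
      ρ.realize u w (f * g) = (ρ.realize v w f).comp (ρ.realize u v g) := by
  refine ⟨LabelledQuiver.mem_sigmaP_mul hf hg, ?_⟩
  simp only [QuiverRep.realize_eq_linearCombination]
  refine MonoidAlgebra.linearCombination_coeff_mul (LinearMap.llcomp K _ _ _) fun a ha b hb => ?_
  obtain ⟨p, rfl⟩ := LabelledQuiver.mem_sigmaP_iff.mp hf a ha
  obtain ⟨q, rfl⟩ := LabelledQuiver.mem_sigmaP_iff.mp hg b hb
  exact hρ.monomialMap_label_mul p q
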